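/- arXiv:1803.02146 — 2 statements merged into one kernel-verified Lean document; each statement's English description precedes it below -/
import Mathlib

section
/- Let n ≥ 1 and let α, β ∈ CP_n. Then α ℛ β in CP_n (i.e., α = β or α = βγ₁ for some γ₁ ∈ CP_n, and β = α or β = αγ₂ for some γ₂ ∈ CP_n) if and only if dom α = dom β, ker α = ker β (for all a, b ∈ dom α: aα = bα ⇔ aβ = bβ), and there exists an integer e such that either aβ = aα + e for all a ∈ dom α, or aβ = e − aα for all a ∈ dom α. -/
/-- A partial transformation of the chain `[n] = {1, …, n}`: a function defined on a
subset `dom ⊆ {1, …, n}` with values in `{1, …, n}` (junk value `0` outside the domain,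
so that equality of partial transformations is equality of domains and of values on
the domain). -/
structure PT (n : ℕ) where
  dom : Finset ℕ
  toFun : ℕ → ℕ
  dom_subset : dom ⊆ Finset.Icc 1 n
  maps_to : ∀ x ∈ dom, toFun x ∈ Finset.Icc 1 n
  zero_outside : ∀ x ∉ dom, toFun x = 0

namespace PT

/-- Left-to-right composition `αβ`: apply `α` first, then `β`.
`dom (αβ) = {x ∈ dom α : xα ∈ dom β}` and `x(αβ) = (xα)β`. -/
def comp {n : ℕ} (α β : PT n) : PT n where
  dom := α.dom.filter (fun x => α.toFun x ∈ β.dom)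
  toFun := fun x => if x ∈ α.dom ∧ α.toFun x ∈ β.dom then β.toFun (α.toFun x) else 0
  dom_subset := fun x hx => α.dom_subset (Finset.mem_filter.mp hx).1
  maps_to := by
    intro x hx
    rw [Finset.mem_filter] at hx
    try simp only []
    rw [if_pos ⟨hx.1, hx.2⟩]
    exact β.maps_to _ hx.2
  zero_outside := by
    intro x hx
    rw [Finset.mem_filter] at hx
    push_neg at hx
    try simp only []
    rw [if_neg]
    rintro ⟨h1, h2⟩
    exact absurd h2 (hx h1)

/-- `α` is a contraction: `|xα − yα| ≤ |x − y|` for all `x, y ∈ dom α`. -/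
def IsContraction {n : ℕ} (α : PT n) : Prop :=
  ∀ x ∈ α.dom, ∀ y ∈ α.dom,
    |(α.toFun x : ℤ) - (α.toFun y : ℤ)| ≤ |(x : ℤ) - (y : ℤ)|

/-- The image `im α = {xα : x ∈ dom α}`. -/
def im {n : ℕ} (α : PT n) : Finset ℕ := α.dom.image α.toFun

/-- `T` is a transversal of the kernel partition `Ker α`: it is contained in `dom α`
and contains exactly one element of each kernel class. -/
def IsTransversal {n : ℕ} (α : PT n) (T : Finset ℕ) : Prop :=
  T ⊆ α.dom ∧ ∀ a ∈ α.dom, ∃! t, t ∈ T ∧ α.toFun t = α.toFun a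

/-- `T` is an admissible transversal of `Ker α`: a transversal such that
`|t − t′| ≤ |a − a′|` whenever `a` is in the kernel class of `t` and `a′` in that
of `t′`. -/
def IsAdmissible {n : ℕ} (α : PT n) (T : Finset ℕ) : Prop :=
  IsTransversal α T ∧
    ∀ t ∈ T, ∀ t' ∈ T, ∀ a ∈ α.dom, ∀ a' ∈ α.dom,
      α.toFun a = α.toFun t → α.toFun a' = α.toFun t' →
        |(t : ℤ) - (t' : ℤ)| ≤ |(a : ℤ) - (a' : ℤ)|

end PT


lemma PT.ext' {n : ℕ} {α β : PT n} (h1 : α.dom = β.dom)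
    (h2 : ∀ x ∈ α.dom, α.toFun x = β.toFun x) : α = β := by
  obtain ⟨d1, f1, p1, p2, z1⟩ := α
  obtain ⟨d2, f2, q1, q2, z2⟩ := β
  simp only at h1 h2 ⊢
  subst h1
  have hf : f1 = f2 := by
    funext x
    by_cases hx : x ∈ d1
    · exact h2 x hx
    · rw [z1 x hx, z2 x hx]
  subst hf
  rfl

lemma key_isometry {D : Finset ℕ} (u v : ℕ → ℕ)
    (h : ∀ a ∈ D, ∀ b ∈ D, |(v a : ℤ) - v b| = |(u a : ℤ) - u b|) :
    ∃ e : ℤ, (∀ a ∈ D, (v a : ℤ) = u a + e) ∨ (∀ a ∈ D, (v a : ℤ) = e - u a) := by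
  rcases D.eq_empty_or_nonempty with rfl | ⟨a0, ha0⟩
  · exact ⟨0, Or.inl (by simp)⟩
  by_cases hc : ∀ a ∈ D, (v a : ℤ) = u a + ((v a0 : ℤ) - u a0)
  · exact ⟨(v a0 : ℤ) - u a0, Or.inl hc⟩
  · push_neg at hc
    obtain ⟨a1, ha1, hne⟩ := hc
    refine ⟨(v a0 : ℤ) + u a0, Or.inr ?_⟩
    intro a ha
    have h0 := abs_eq_abs.mp (h a ha a0 ha0)
    have h1 := abs_eq_abs.mp (h a1 ha1 a0 ha0)
    have h2 := abs_eq_abs.mp (h a ha a1 ha1)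
    omega

lemma exists_factor {n : ℕ} (α β : PT n) (hdom : α.dom = β.dom) (s e : ℤ)
    (hs : s = 1 ∨ s = -1)
    (h : ∀ a ∈ α.dom, (α.toFun a : ℤ) = s * (β.toFun a : ℤ) + e) :
    ∃ γ : PT n, PT.IsContraction γ ∧ α = β.comp γ := by
  have hval : ∀ a ∈ β.dom, (s * (β.toFun a : ℤ) + e).toNat = α.toFun a := by
    intro a ha
    have := h a (hdom ▸ ha)
    omega
  refine ⟨⟨β.im, fun x => if x ∈ β.im then (s * (x : ℤ) + e).toNat else 0,
    ?_, ?_, ?_⟩, ?_, ?_⟩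
  · intro x hx
    obtain ⟨a, ha, rfl⟩ := Finset.mem_image.mp hx
    exact β.maps_to a ha
  · intro x hx
    simp only [hx, if_pos]
    obtain ⟨a, ha, rfl⟩ := Finset.mem_image.mp hx
    rw [hval a ha]
    exact α.maps_to a (hdom ▸ ha)
  · intro x hx
    exact if_neg hx
  · intro x hx y hy
    simp only at hx hy ⊢
    rw [if_pos hx, if_pos hy]
    obtain ⟨a, ha, rfl⟩ := Finset.mem_image.mp hx
    obtain ⟨b, hb, rfl⟩ := Finset.mem_image.mp hy
    rw [hval a ha, hval b hb]
    have h1 := h a (hdom ▸ ha)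
    have h2 := h b (hdom ▸ hb)
    rcases hs with rfl | rfl
    · have hd : (α.toFun a : ℤ) - α.toFun b = (β.toFun a : ℤ) - β.toFun b := by omega
      rw [hd]
    · have hd : (α.toFun a : ℤ) - α.toFun b = -((β.toFun a : ℤ) - β.toFun b) := by omega
      rw [hd, abs_neg]
  · apply PT.ext'
    · show α.dom = β.dom.filter (fun x => β.toFun x ∈ β.im)
      rw [Finset.filter_true_of_mem, hdom]
      intro x hx
      exact Finset.mem_image.mpr ⟨x, hx, rfl⟩
    · intro x hx
      have hxβ : x ∈ β.dom := hdom ▸ hx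
      have him : β.toFun x ∈ β.im := Finset.mem_image.mpr ⟨x, hxβ, rfl⟩
      show α.toFun x = if x ∈ β.dom ∧ β.toFun x ∈ β.im then
        (if β.toFun x ∈ β.im then (s * (β.toFun x : ℤ) + e).toNat else 0) else 0
      rw [if_pos ⟨hxβ, him⟩, if_pos him, hval x hxβ]


/-- Green's `ℛ`-relation in the semigroup `CP n` of partial contractions:
`α ℛ β` iff `α (CP n)¹ = β (CP n)¹`. -/
def GreenR {n : ℕ} (α β : PT n) : Prop :=
  (α = β ∨ ∃ γ : PT n, PT.IsContraction γ ∧ α = β.comp γ) ∧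
  (β = α ∨ ∃ γ : PT n, PT.IsContraction γ ∧ β = α.comp γ)

/-- Characterization of Green's `ℛ`-relation on `CP n`. -/
theorem greenR_iff (n : ℕ) (hn : 1 ≤ n) (α β : PT n)
    (hα : PT.IsContraction α) (hβ : PT.IsContraction β) :
    GreenR α β ↔
      α.dom = β.dom ∧
      (∀ a ∈ α.dom, ∀ b ∈ α.dom, (α.toFun a = α.toFun b ↔ β.toFun a = β.toFun b)) ∧
      (∃ e : ℤ,
        (∀ a ∈ α.dom, (β.toFun a : ℤ) = (α.toFun a : ℤ) + e) ∨
        (∀ a ∈ α.dom, (β.toFun a : ℤ) = e - (α.toFun a : ℤ))) := by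
  constructor
  · rintro ⟨h1, h2⟩
    rcases h1 with rfl | ⟨γ, hγ, hαβγ⟩
    · exact ⟨rfl, fun a _ b _ => Iff.rfl, 0, Or.inl fun a _ => by ring⟩
    rcases h2 with rfl | ⟨γ', hγ', hβαγ'⟩
    · exact ⟨rfl, fun a _ b _ => Iff.rfl, 0, Or.inl fun a _ => by ring⟩
    have hαval : ∀ a ∈ α.dom, a ∈ β.dom ∧ β.toFun a ∈ γ.dom ∧
        α.toFun a = γ.toFun (β.toFun a) := by
      intro a ha
      have hd : a ∈ (β.comp γ).dom := congrArg PT.dom hαβγ ▸ ha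
      have hd' := Finset.mem_filter.mp hd
      refine ⟨hd'.1, hd'.2, ?_⟩
      have hf : α.toFun a = (β.comp γ).toFun a :=
        congrFun (congrArg PT.toFun hαβγ) a
      rw [hf]
      show (if a ∈ β.dom ∧ β.toFun a ∈ γ.dom then γ.toFun (β.toFun a) else 0) = _
      rw [if_pos ⟨hd'.1, hd'.2⟩]
    have hβval : ∀ a ∈ β.dom, a ∈ α.dom ∧ α.toFun a ∈ γ'.dom ∧
        β.toFun a = γ'.toFun (α.toFun a) := by
      intro a ha
      have hd : a ∈ (α.comp γ').dom := congrArg PT.dom hβαγ' ▸ ha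
      have hd' := Finset.mem_filter.mp hd
      refine ⟨hd'.1, hd'.2, ?_⟩
      have hf : β.toFun a = (α.comp γ').toFun a :=
        congrFun (congrArg PT.toFun hβαγ') a
      rw [hf]
      show (if a ∈ α.dom ∧ α.toFun a ∈ γ'.dom then γ'.toFun (α.toFun a) else 0) = _
      rw [if_pos ⟨hd'.1, hd'.2⟩]
    have hdom : α.dom = β.dom :=
      Finset.Subset.antisymm (fun a ha => (hαval a ha).1) (fun a ha => (hβval a ha).1)
    have hiso : ∀ a ∈ α.dom, ∀ b ∈ α.dom,
        |(β.toFun a : ℤ) - β.toFun b| = |(α.toFun a : ℤ) - α.toFun b| := by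
      intro a ha b hb
      obtain ⟨haβ, haγ, haf⟩ := hαval a ha
      obtain ⟨hbβ, hbγ, hbf⟩ := hαval b hb
      obtain ⟨_, haγ', haf'⟩ := hβval a haβ
      obtain ⟨_, hbγ', hbf'⟩ := hβval b hbβ
      apply le_antisymm
      · rw [haf', hbf']
        exact hγ' _ haγ' _ hbγ'
      · rw [haf, hbf]
        exact hγ _ haγ _ hbγ
    refine ⟨hdom, ?_, ?_⟩
    · intro a ha b hb
      have h := hiso a ha b hb
      constructor
      · intro hab
        obtain ⟨haβ, _, haf'⟩ := hβval a (hdom ▸ ha)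
        obtain ⟨_, _, hbf'⟩ := hβval b (hdom ▸ hb)
        rw [haf', hbf', hab]
      · intro hab
        obtain ⟨_, _, haf⟩ := hαval a ha
        obtain ⟨_, _, hbf⟩ := hαval b hb
        rw [haf, hbf, hab]
    · exact key_isometry α.toFun β.toFun hiso
  · rintro ⟨hdom, hker, e, hcase | hcase⟩
    · obtain ⟨γ₁, hγ₁, hfac₁⟩ := exists_factor α β hdom 1 (-e) (Or.inl rfl)
        (fun a ha => by have := hcase a ha; push_cast; omega)
      obtain ⟨γ₂, hγ₂, hfac₂⟩ := exists_factor β α hdom.symm 1 e (Or.inl rfl)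
        (fun a ha => by have := hcase a (hdom ▸ ha); push_cast; omega)
      exact ⟨Or.inr ⟨γ₁, hγ₁, hfac₁⟩, Or.inr ⟨γ₂, hγ₂, hfac₂⟩⟩
    · obtain ⟨γ₁, hγ₁, hfac₁⟩ := exists_factor α β hdom (-1) e (Or.inr rfl)
        (fun a ha => by have := hcase a ha; push_cast; omega)
      obtain ⟨γ₂, hγ₂, hfac₂⟩ := exists_factor β α hdom.symm (-1) e (Or.inr rfl)
        (fun a ha => by have := hcase a (hdom ▸ ha); push_cast; omega)
      exact ⟨Or.inr ⟨γ₁, hγ₁, hfac₁⟩, Or.inr ⟨γ₂, hγ₂, hfac₂⟩⟩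
end

section
/- Let n ≥ 1 and let α, β ∈ OCP_n both be regular in OCP_n (each x ∈ {α, β} satisfies x = xγx for some γ ∈ OCP_n). Then α 𝒟 β in OCP_n if and only if there exists an integer e such that im α = {y + e : y ∈ im β}. -/
/-- `α` is order-preserving: `x ≤ y` implies `xα ≤ yα` for all `x, y ∈ dom α`. -/
def OrderPres {n : ℕ} (α : PT n) : Prop :=
  ∀ x ∈ α.dom, ∀ y ∈ α.dom, x ≤ y → α.toFun x ≤ α.toFun y

/-- Green's `ℒ`-relation in the semigroup `OCP n` of order-preserving partial
contractions. -/
def GreenLO {n : ℕ} (α β : PT n) : Prop :=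
  (α = β ∨ ∃ γ : PT n, PT.IsContraction γ ∧ OrderPres γ ∧ α = γ.comp β) ∧
  (β = α ∨ ∃ γ : PT n, PT.IsContraction γ ∧ OrderPres γ ∧ β = γ.comp α)

/-- Green's `ℛ`-relation in the semigroup `OCP n` of order-preserving partial
contractions. -/
def GreenRO {n : ℕ} (α β : PT n) : Prop :=
  (α = β ∨ ∃ γ : PT n, PT.IsContraction γ ∧ OrderPres γ ∧ α = β.comp γ) ∧
  (β = α ∨ ∃ γ : PT n, PT.IsContraction γ ∧ OrderPres γ ∧ β = α.comp γ)

section Helpers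

namespace PT

variable {n : ℕ}

lemma ext'_s18 {α β : PT n} (h1 : α.dom = β.dom) (h2 : α.toFun = β.toFun) : α = β := by
  cases α; cases β; simp_all

lemma ext_of {α β : PT n} (h1 : α.dom = β.dom)
    (h2 : ∀ x ∈ α.dom, α.toFun x = β.toFun x) : α = β := by
  refine ext'_s18 h1 (funext fun x => ?_)
  by_cases hx : x ∈ α.dom
  · exact h2 x hx
  · rw [α.zero_outside x hx, β.zero_outside x (h1 ▸ hx)]

lemma mem_comp_dom {α β : PT n} {x : ℕ} :
    x ∈ (α.comp β).dom ↔ x ∈ α.dom ∧ α.toFun x ∈ β.dom := by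
  simp [comp, Finset.mem_filter]

lemma comp_toFun_of {α β : PT n} {x : ℕ} (h1 : x ∈ α.dom) (h2 : α.toFun x ∈ β.dom) :
    (α.comp β).toFun x = β.toFun (α.toFun x) := by
  simp [comp, h1, h2]

lemma mem_im {α : PT n} {y : ℕ} : y ∈ α.im ↔ ∃ x ∈ α.dom, α.toFun x = y := by
  simp [im]

lemma toFun_mem_im {α : PT n} {x : ℕ} (h : x ∈ α.dom) : α.toFun x ∈ α.im :=
  Finset.mem_image_of_mem _ h

lemma im_subset_Icc (α : PT n) : α.im ⊆ Finset.Icc 1 n := by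
  intro y hy
  obtain ⟨x, hx, rfl⟩ := mem_im.mp hy
  exact α.maps_to x hx

lemma comp_assoc (α β γ : PT n) : (α.comp β).comp γ = α.comp (β.comp γ) := by
  have hdom : ((α.comp β).comp γ).dom = (α.comp (β.comp γ)).dom := by
    ext x
    constructor
    · intro hx
      obtain ⟨h12, h3⟩ := mem_comp_dom.mp hx
      obtain ⟨h1, h2⟩ := mem_comp_dom.mp h12
      rw [comp_toFun_of h1 h2] at h3
      exact mem_comp_dom.mpr ⟨h1, mem_comp_dom.mpr ⟨h2, h3⟩⟩
    · intro hx
      obtain ⟨h1, h23⟩ := mem_comp_dom.mp hx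
      obtain ⟨h2, h3⟩ := mem_comp_dom.mp h23
      exact mem_comp_dom.mpr ⟨mem_comp_dom.mpr ⟨h1, h2⟩,
        by rw [comp_toFun_of h1 h2]; exact h3⟩
  refine ext_of hdom ?_
  intro x hx
  have hx' := hx
  rw [mem_comp_dom] at hx'
  obtain ⟨h12, h3⟩ := hx'
  have h1 := (mem_comp_dom.mp h12).1
  have h2 := (mem_comp_dom.mp h12).2
  rw [comp_toFun_of h1 h2] at h3
  rw [comp_toFun_of h12 (by rw [comp_toFun_of h1 h2]; exact h3),
    comp_toFun_of h1 h2, comp_toFun_of h1 (mem_comp_dom.mpr ⟨h2, h3⟩),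
    comp_toFun_of h2 h3]

lemma IsContraction.comp' {α β : PT n} (hα : IsContraction α) (hβ : IsContraction β) :
    IsContraction (α.comp β) := by
  intro x hx y hy
  rw [mem_comp_dom] at hx hy
  rw [comp_toFun_of hx.1 hx.2, comp_toFun_of hy.1 hy.2]
  exact le_trans (hβ _ hx.2 _ hy.2) (hα _ hx.1 _ hy.1)

lemma OrderPres.comp' {α β : PT n} (hα : OrderPres α) (hβ : OrderPres β) :
    OrderPres (α.comp β) := by
  intro x hx y hy hxy
  rw [mem_comp_dom] at hx hy
  rw [comp_toFun_of hx.1 hx.2, comp_toFun_of hy.1 hy.2]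
  exact hβ _ hx.2 _ hy.2 (hα _ hx.1 _ hy.1 hxy)

lemma im_comp_subset (α β : PT n) : (α.comp β).im ⊆ β.im := by
  intro y hy
  obtain ⟨x, hx, rfl⟩ := mem_im.mp hy
  rw [mem_comp_dom] at hx
  rw [comp_toFun_of hx.1 hx.2]
  exact toFun_mem_im hx.2

lemma comp_self_fix {α μ : PT n} (h : α = α.comp μ) :
    ∀ y ∈ α.im, y ∈ μ.dom ∧ μ.toFun y = y := by
  intro y hy
  obtain ⟨x, hx, rfl⟩ := mem_im.mp hy
  have hd : x ∈ (α.comp μ).dom := h ▸ hx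
  rw [mem_comp_dom] at hd
  refine ⟨hd.2, ?_⟩
  have hh := congrArg (fun t : PT n => t.toFun x) h
  rw [comp_toFun_of hd.1 hd.2] at hh
  exact hh.symm

lemma comp_fix {α η : PT n} (h1 : ∀ y ∈ α.im, y ∈ η.dom ∧ η.toFun y = y) :
    α.comp η = α := by
  refine ext_of ?_ ?_
  · ext x
    rw [mem_comp_dom]
    exact ⟨And.left, fun hx => ⟨hx, (h1 _ (toFun_mem_im hx)).1⟩⟩
  · intro x hx
    rw [mem_comp_dom] at hx
    rw [comp_toFun_of hx.1 hx.2]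
    exact (h1 _ (toFun_mem_im hx.1)).2

end PT

end Helpers

namespace PT

variable {n : ℕ}

/-- Shift a partial transformation by `e`, given that all shifted values stay in range. -/
def shift (β : PT n) (e : ℤ)
    (h : ∀ y ∈ β.im, ∃ a ∈ Finset.Icc 1 n, (a : ℤ) = (y : ℤ) + e) : PT n where
  dom := β.dom
  toFun x := if x ∈ β.dom then ((β.toFun x : ℤ) + e).toNat else 0
  dom_subset := β.dom_subset
  maps_to := by
    intro x hx
    obtain ⟨a, ha, hae⟩ := h _ (toFun_mem_im hx)
    simp only [if_pos hx, ← hae, Int.toNat_natCast]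
    exact ha
  zero_outside := fun x hx => by simp [if_neg hx]

lemma shift_dom {β : PT n} {e h} : (shift β e h).dom = β.dom := rfl

lemma shift_toFun {β : PT n} {e h} {x : ℕ} (hx : x ∈ β.dom) :
    ((shift β e h).toFun x : ℤ) = (β.toFun x : ℤ) + e := by
  obtain ⟨a, _, hae⟩ := h _ (toFun_mem_im hx)
  simp only [shift, if_pos hx, ← hae, Int.toNat_natCast]

lemma shift_contraction {β : PT n} {e h} (hβ : IsContraction β) :
    IsContraction (shift β e h) := by
  intro x hx y hy
  rw [shift_dom] at hx hy
  rw [shift_toFun hx, shift_toFun hy]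
  have := hβ x hx y hy
  simpa using this

lemma shift_orderPres {β : PT n} {e h} (hβ : OrderPres β) :
    OrderPres (shift β e h) := by
  intro x hx y hy hxy
  rw [shift_dom] at hx hy
  rw [← Nat.cast_le (α := ℤ), shift_toFun hx, shift_toFun hy]
  have := hβ x hx y hy hxy
  omega

lemma shift_im_cast {β : PT n} {e h} :
    (shift β e h).im.image (fun y : ℕ => (y : ℤ)) =
      β.im.image (fun y : ℕ => (y : ℤ) + e) := by
  rw [im, im, shift_dom, Finset.image_image, Finset.image_image]
  apply Finset.image_congr
  intro x hx
  exact shift_toFun hx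

/-- The partial identity on a subset `S ⊆ [n]`. -/
def pid (n : ℕ) (S : Finset ℕ) (hS : S ⊆ Finset.Icc 1 n) : PT n where
  dom := S
  toFun x := if x ∈ S then x else 0
  dom_subset := hS
  maps_to := fun x hx => by simpa [if_pos hx] using hS hx
  zero_outside := fun x hx => by simp [if_neg hx]

lemma pid_dom {S hS} : (pid n S hS).dom = S := rfl

lemma pid_toFun {S : Finset ℕ} {hS} {x : ℕ} (hx : x ∈ S) : (pid n S hS).toFun x = x := by
  simp [pid, if_pos hx]

lemma pid_im {S : Finset ℕ} {hS} : (pid n S hS).im = S := by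
  ext y
  simp only [im, pid_dom, Finset.mem_image]
  constructor
  · rintro ⟨x, hx, rfl⟩
    rw [pid_toFun hx]; exact hx
  · intro hy
    exact ⟨y, hy, pid_toFun hy⟩

end PT

namespace PT

variable {n : ℕ}

lemma pid_contraction {S : Finset ℕ} {hS : S ⊆ Finset.Icc 1 n} :
    IsContraction (pid n S hS) := by
  intro x hx y hy
  rw [pid_dom] at hx hy
  rw [pid_toFun hx, pid_toFun hy]

lemma pid_orderPres {S : Finset ℕ} {hS : S ⊆ Finset.Icc 1 n} :
    OrderPres (pid n S hS) := by
  intro x hx y hy hxy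
  rw [pid_dom] at hx hy
  rw [pid_toFun hx, pid_toFun hy]
  exact hxy

end PT

lemma im_eq_of_greenLO {n : ℕ} {α c : PT n} (h : GreenLO α c) : α.im = c.im := by
  apply Finset.Subset.antisymm
  · rcases h.1 with rfl | ⟨γ, -, -, heq⟩
    · exact Finset.Subset.refl _
    · rw [heq]; exact PT.im_comp_subset _ _
  · rcases h.2 with rfl | ⟨γ, -, -, heq⟩
    · exact Finset.Subset.refl _
    · rw [heq]; exact PT.im_comp_subset _ _

lemma translate_of_greenRO {n : ℕ} {c β : PT n} (hco : OrderPres c) (hβo : OrderPres β)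
    (h : GreenRO c β) :
    ∃ e : ℤ, c.im.image (fun y : ℕ => (y : ℤ)) =
      β.im.image (fun y : ℕ => (y : ℤ) + e) := by
  rcases h.1 with rfl | ⟨γ, hγc, hγo, heq⟩
  · exact ⟨0, by simp⟩
  rcases h.2 with heq2 | ⟨δ, hδc, hδo, heq2⟩
  · exact ⟨0, by rw [heq2]; simp⟩
  have hdom : c.dom = β.dom := by
    apply Finset.Subset.antisymm
    · rw [heq]
      intro x hx
      exact (PT.mem_comp_dom.mp hx).1
    · intro x hx
      have hx' : x ∈ (c.comp δ).dom := by rw [← heq2]; exact hx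
      exact (PT.mem_comp_dom.mp hx').1
  have key : ∀ x ∈ β.dom, ∀ y ∈ β.dom, x ≤ y →
      (c.toFun y : ℤ) - c.toFun x = (β.toFun y : ℤ) - β.toFun x := by
    intro x hx y hy hxy
    have hxc : x ∈ c.dom := by rw [hdom]; exact hx
    have hyc : y ∈ c.dom := by rw [hdom]; exact hy
    -- unpack heq at x, y
    have hxγ : x ∈ (β.comp γ).dom := by rw [← heq]; exact hxc
    have hyγ : y ∈ (β.comp γ).dom := by rw [← heq]; exact hyc
    rw [PT.mem_comp_dom] at hxγ hyγ
    have hcx : c.toFun x = γ.toFun (β.toFun x) := by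
      rw [heq]; exact PT.comp_toFun_of hxγ.1 hxγ.2
    have hcy : c.toFun y = γ.toFun (β.toFun y) := by
      rw [heq]; exact PT.comp_toFun_of hyγ.1 hyγ.2
    have hxδ : x ∈ (c.comp δ).dom := by rw [← heq2]; exact hx
    have hyδ : y ∈ (c.comp δ).dom := by rw [← heq2]; exact hy
    rw [PT.mem_comp_dom] at hxδ hyδ
    have hbx : β.toFun x = δ.toFun (c.toFun x) := by
      rw [heq2]; exact PT.comp_toFun_of hxδ.1 hxδ.2
    have hby : β.toFun y = δ.toFun (c.toFun y) := by
      rw [heq2]; exact PT.comp_toFun_of hyδ.1 hyδ.2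
    have e1 : |(c.toFun y : ℤ) - c.toFun x| ≤ |(β.toFun y : ℤ) - β.toFun x| := by
      rw [hcx, hcy]
      exact hγc _ hyγ.2 _ hxγ.2
    have e2 : |(β.toFun y : ℤ) - β.toFun x| ≤ |(c.toFun y : ℤ) - c.toFun x| := by
      rw [hbx, hby]
      exact hδc _ hyδ.2 _ hxδ.2
    have habs := le_antisymm e1 e2
    have m1 : (c.toFun x : ℤ) ≤ c.toFun y := Nat.cast_le.mpr (hco x hxc y hyc hxy)
    have m2 : (β.toFun x : ℤ) ≤ β.toFun y := Nat.cast_le.mpr (hβo x hx y hy hxy)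
    rw [abs_of_nonneg (by linarith), abs_of_nonneg (by linarith)] at habs
    exact habs
  by_cases hne : β.dom.Nonempty
  · obtain ⟨x0, hx0⟩ := hne
    refine ⟨(c.toFun x0 : ℤ) - β.toFun x0, ?_⟩
    rw [PT.im, PT.im, hdom, Finset.image_image, Finset.image_image]
    apply Finset.image_congr
    intro x hx
    simp only [Function.comp_apply]
    rcases le_total x x0 with hle | hle
    · have := key x hx x0 hx0 hle
      linarith
    · have := key x0 hx0 x hx hle
      linarith
  · rw [Finset.not_nonempty_iff_eq_empty] at hne
    exact ⟨0, by simp [PT.im, hne, hdom]⟩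

/-- For regular elements of `OCP n`: `α 𝒟 β` iff `im α` is a
translate of `im β`. -/
theorem ocp_greenD_iff_of_regular (n : ℕ) (hn : 1 ≤ n) (α β : PT n)
    (hα : PT.IsContraction α) (hαo : OrderPres α)
    (hβ : PT.IsContraction β) (hβo : OrderPres β)
    (hrα : ∃ γ : PT n, PT.IsContraction γ ∧ OrderPres γ ∧ α = (α.comp γ).comp α)
    (hrβ : ∃ γ : PT n, PT.IsContraction γ ∧ OrderPres γ ∧ β = (β.comp γ).comp β) :
    (∃ c : PT n, PT.IsContraction c ∧ OrderPres c ∧ GreenLO α c ∧ GreenRO c β) ↔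
      ∃ e : ℤ, α.im.image (fun y : ℕ => (y : ℤ)) =
        β.im.image (fun y : ℕ => (y : ℤ) + e) := by
  constructor
  · rintro ⟨c, hcC, hcO, hL, hR⟩
    obtain ⟨e, he⟩ := translate_of_greenRO hcO hβo hR
    exact ⟨e, by rw [im_eq_of_greenLO hL]; exact he⟩
  · rintro ⟨e, him⟩
    have hcond : ∀ y ∈ β.im, ∃ a ∈ Finset.Icc 1 n, (a : ℤ) = (y : ℤ) + e := by
      intro y hy
      have hmem : ((y : ℤ) + e) ∈ β.im.image (fun y : ℕ => (y : ℤ) + e) :=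
        Finset.mem_image_of_mem _ hy
      rw [← him] at hmem
      obtain ⟨a, ha, hae⟩ := Finset.mem_image.mp hmem
      exact ⟨a, PT.im_subset_Icc α ha, hae⟩
    set c := PT.shift β e hcond with hc
    have hcC : PT.IsContraction c := PT.shift_contraction hβ
    have hcO : OrderPres c := PT.shift_orderPres hβo
    have him_c : c.im = α.im := by
      apply Finset.image_injective (f := (Nat.cast : ℕ → ℤ)) Nat.cast_injective
      rw [PT.shift_im_cast, ← him]
    have hcond' : ∀ y ∈ (PT.pid n β.im (PT.im_subset_Icc β)).im,
        ∃ a ∈ Finset.Icc 1 n, (a : ℤ) = (y : ℤ) + e := by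
      rw [PT.pid_im]; exact hcond
    set τ := PT.shift (PT.pid n β.im (PT.im_subset_Icc β)) e hcond' with hτ
    have hτC : PT.IsContraction τ := PT.shift_contraction PT.pid_contraction
    have hτO : OrderPres τ := PT.shift_orderPres PT.pid_orderPres
    have hcondα : ∀ y ∈ (PT.pid n α.im (PT.im_subset_Icc α)).im,
        ∃ a ∈ Finset.Icc 1 n, (a : ℤ) = (y : ℤ) + (-e) := by
      rw [PT.pid_im]
      intro y hy
      have hmem : (y : ℤ) ∈ α.im.image (fun y : ℕ => (y : ℤ)) :=
        Finset.mem_image_of_mem _ hy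
      rw [him] at hmem
      obtain ⟨b, hb, hbe⟩ := Finset.mem_image.mp hmem
      exact ⟨b, PT.im_subset_Icc β hb, by omega⟩
    set τ' := PT.shift (PT.pid n α.im (PT.im_subset_Icc α)) (-e) hcondα with hτ'
    have hτ'C : PT.IsContraction τ' := PT.shift_contraction PT.pid_contraction
    have hτ'O : OrderPres τ' := PT.shift_orderPres PT.pid_orderPres
    -- c = β.comp τ
    have hdomc : c.dom = β.dom := PT.shift_dom
    have hdomτ : τ.dom = β.im := PT.shift_dom
    have hdomτ' : τ'.dom = α.im := PT.shift_dom
    have hcval : ∀ x ∈ β.dom, (c.toFun x : ℤ) = (β.toFun x : ℤ) + e :=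
      fun x hx => PT.shift_toFun hx
    have hcβ : c = β.comp τ := by
      symm
      apply PT.ext_of
      · ext x
        rw [PT.mem_comp_dom, hdomτ, hdomc]
        exact ⟨And.left, fun hx => ⟨hx, PT.toFun_mem_im hx⟩⟩
      · intro x hx
        have hx' := (PT.mem_comp_dom.mp hx).1
        have hxim : β.toFun x ∈ β.im := PT.toFun_mem_im hx'
        rw [PT.comp_toFun_of hx' (by rw [hdomτ]; exact hxim)]
        apply Nat.cast_injective (R := ℤ)
        rw [PT.shift_toFun (by rw [PT.pid_dom]; exact hxim), PT.pid_toFun hxim,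
          hcval x hx']
    -- β = c.comp τ'
    have hcim : ∀ x ∈ β.dom, c.toFun x ∈ α.im := by
      intro x hx
      rw [← him_c]
      exact PT.toFun_mem_im (by rw [hdomc]; exact hx)
    have hβc : β = c.comp τ' := by
      symm
      apply PT.ext_of
      · ext x
        rw [PT.mem_comp_dom, hdomτ', hdomc]
        exact ⟨And.left, fun hx => ⟨hx, hcim x hx⟩⟩
      · intro x hx
        obtain ⟨hx1, hx2⟩ := PT.mem_comp_dom.mp hx
        have hx' : x ∈ β.dom := by rw [← hdomc]; exact hx1
        rw [PT.comp_toFun_of hx1 hx2]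
        apply Nat.cast_injective (R := ℤ)
        have hcim' : c.toFun x ∈ α.im := hcim x hx'
        rw [PT.shift_toFun (by rw [PT.pid_dom]; exact hcim'), PT.pid_toFun hcim',
          hcval x hx']
        ring
    -- c = (c.comp γ).comp α  via regularity of α
    obtain ⟨γ, hγC, hγO, hreg⟩ := hrα
    have hμ : α = α.comp (γ.comp α) := by rw [← PT.comp_assoc]; exact hreg
    have hfixα := PT.comp_self_fix hμ
    have hc_from_α : c = (c.comp γ).comp α := by
      rw [PT.comp_assoc]
      symm
      apply PT.comp_fix
      intro y hy
      rw [him_c] at hy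
      exact hfixα y hy
    -- α = (α.comp (τ'.comp δ)).comp c  via regularity of β
    obtain ⟨δ, hδC, hδO, hregβ⟩ := hrβ
    have step : c = (c.comp (τ'.comp δ)).comp c := by
      calc c = β.comp τ := hcβ
        _ = ((β.comp δ).comp β).comp τ := by rw [← hregβ]
        _ = (β.comp δ).comp (β.comp τ) := by rw [PT.comp_assoc]
        _ = (β.comp δ).comp c := by rw [← hcβ]
        _ = ((c.comp τ').comp δ).comp c := by rw [← hβc]
        _ = (c.comp (τ'.comp δ)).comp c := by rw [PT.comp_assoc c τ' δ]
    rw [PT.comp_assoc] at step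
    have hfixc := PT.comp_self_fix step
    have hα_from_c : α = (α.comp (τ'.comp δ)).comp c := by
      rw [PT.comp_assoc]
      symm
      apply PT.comp_fix
      intro y hy
      rw [← him_c] at hy
      exact hfixc y hy
    refine ⟨c, hcC, hcO, ⟨Or.inr ⟨α.comp (τ'.comp δ), ?_, ?_, hα_from_c⟩,
      Or.inr ⟨c.comp γ, ?_, ?_, hc_from_α⟩⟩,
      ⟨Or.inr ⟨τ, hτC, hτO, hcβ⟩, Or.inr ⟨τ', hτ'C, hτ'O, hβc⟩⟩⟩
    · exact hα.comp' (hτ'C.comp' hδC)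
    · exact PT.OrderPres.comp' hαo (PT.OrderPres.comp' hτ'O hδO)
    · exact hcC.comp' hγC
    · exact PT.OrderPres.comp' hcO hγO
end
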